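/- arXiv:1207.2870 — 2 statements merged into one kernel-verified Lean document; each statement's English description precedes it below -/
import Mathlib

section
/- Let u > 0 solve the Choquard equation -(1/(2m)) u = -(1/(2m)) Δu + u Δ⁻¹(u²) on ℝ³, let n ∈ ℂ² be a unit vector, and set Φ_e = n u and Φ_p = -(1/(2m)) i σ·∇ Φ_e. Then (Φ_e, Φ_p) solves the ε = 0 system: -(1/(2m)) Φ_e = -iσ·∇Φ_p + Φ_e Δ⁻¹|Φ_e|² and 2m Φ_p = -iσ·∇Φ_e. -/
open MeasureTheory Real Matrix Complex

noncomputable section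

/-- The Pauli matrices. -/
def pauli : Fin 3 → Matrix (Fin 2) (Fin 2) ℂ :=
  ![!![0, 1; 1, 0], !![0, -I; I, 0], !![1, 0; 0, -1]]

/-- Standard basis vector of ℝ³. -/
def e3 (j : Fin 3) : EuclideanSpace ℝ (Fin 3) := EuclideanSpace.single j 1

/-- Partial derivative in direction j. -/
def pd {F : Type*} [NormedAddCommGroup F] [NormedSpace ℝ F]
    (j : Fin 3) (f : EuclideanSpace ℝ (Fin 3) → F) (x : EuclideanSpace ℝ (Fin 3)) : F :=
  fderiv ℝ f x (e3 j)

/-- The Laplacian on ℝ³. -/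
def lap {F : Type*} [NormedAddCommGroup F] [NormedSpace ℝ F]
    (f : EuclideanSpace ℝ (Fin 3) → F) (x : EuclideanSpace ℝ (Fin 3)) : F :=
  ∑ j : Fin 3, pd j (pd j f) x

/-- σ·∇ acting on ℂ²-valued functions. -/
def sigmaGrad (f : EuclideanSpace ℝ (Fin 3) → (Fin 2 → ℂ))
    (x : EuclideanSpace ℝ (Fin 3)) : Fin 2 → ℂ :=
  ∑ j : Fin 3, (pauli j).mulVec (pd j f x)

/-- The Newtonian potential Δ⁻¹f. -/
def newton (f : EuclideanSpace ℝ (Fin 3) → ℝ) (x : EuclideanSpace ℝ (Fin 3)) : ℝ :=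
  -(1 / (4 * π)) * ∫ y, f y / dist x y

/-- Auxiliary: the continuous ℝ-linear map `t ↦ (t : ℂ) • c` on `Fin 2 → ℂ`. -/
def Lmap (c : Fin 2 → ℂ) : ℝ →L[ℝ] (Fin 2 → ℂ) :=
  ((ContinuousLinearMap.toSpanSingleton ℂ c).restrictScalars ℝ).comp Complex.ofRealCLM

lemma fderiv_ofReal_smul {E : Type*} [NormedAddCommGroup E] [NormedSpace ℝ E]
    (f : E → ℝ) {x : E} (hf : DifferentiableAt ℝ f x) (c : Fin 2 → ℂ) (v : E) :
    fderiv ℝ (fun x => (f x : ℂ) • c) x v = (fderiv ℝ f x v : ℂ) • c := by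
  have h := ((Lmap c).hasFDerivAt.comp x hf.hasFDerivAt).fderiv
  have h2 : (fun x => (f x : ℂ) • c) = (Lmap c) ∘ f := rfl
  rw [h2, h]; rfl

lemma pauli_key (w : Fin 3 → Fin 3 → ℝ) (hsymm : ∀ k j, w k j = w j k) (n : Fin 2 → ℂ) :
    ∑ k : Fin 3, ∑ j : Fin 3, (w k j : ℂ) • (pauli k).mulVec ((pauli j).mulVec n)
      = ((∑ j : Fin 3, w j j : ℝ) : ℂ) • n := by
  have h01 : ((w 0 1 : ℝ) : ℂ) = ((w 1 0 : ℝ) : ℂ) := by rw [hsymm 0 1]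
  have h02 : ((w 0 2 : ℝ) : ℂ) = ((w 2 0 : ℝ) : ℂ) := by rw [hsymm 0 2]
  have h12 : ((w 1 2 : ℝ) : ℂ) = ((w 2 1 : ℝ) : ℂ) := by rw [hsymm 1 2]
  funext a
  fin_cases a <;>
    [skip; skip] <;>
    simp [Fin.sum_univ_three, pauli, Matrix.mulVec, dotProduct, Fin.sum_univ_two]
  · linear_combination n 0*I*h01 + n 1*I*h12 - n 1*h02 - n 0*((w 1 1 : ℝ) : ℂ)*I_sq
  · linear_combination (-(n 1))*I*h01 + n 0*I*h12 + n 0*h02 - n 1*((w 1 1 : ℝ) : ℂ)*I_sq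

lemma pd_symm (u : EuclideanSpace ℝ (Fin 3) → ℝ) (hu : ContDiff ℝ (⊤ : ℕ∞) u)
    (j k : Fin 3) (x : EuclideanSpace ℝ (Fin 3)) :
    pd k (pd j u) x = pd j (pd k u) x := by
  have h1 : pd k (pd j u) x = fderiv ℝ (fderiv ℝ u) x (e3 k) (e3 j) := by
    show fderiv ℝ (fun y => fderiv ℝ u y (e3 j)) x (e3 k) = _
    rw [fderiv_clm_apply ((hu.fderiv_right (m := (⊤ : ℕ∞)) (by simp)).differentiable (by simp)).differentiableAt
      (differentiableAt_const (e3 j))]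
    simp
  have h2 : pd j (pd k u) x = fderiv ℝ (fderiv ℝ u) x (e3 j) (e3 k) := by
    show fderiv ℝ (fun y => fderiv ℝ u y (e3 k)) x (e3 j) = _
    rw [fderiv_clm_apply ((hu.fderiv_right (m := (⊤ : ℕ∞)) (by simp)).differentiable (by simp)).differentiableAt
      (differentiableAt_const (e3 k))]
    simp
  rw [h1, h2]
  exact (hu.contDiffAt.isSymmSndFDerivAt (by rw [minSmoothness_of_isRCLikeNormedField]; exact WithTop.coe_le_coe.mpr le_top)).eq (e3 k) (e3 j)

lemma real_smul_pi (r : ℝ) (v : Fin 2 → ℂ) : r • v = (r : ℂ) • v := by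
  funext a; simp [Complex.real_smul]

/-- If u > 0 solves the Choquard equation -(1/(2m))u = -(1/(2m))Δu + uΔ⁻¹(u²),
n ∈ ℂ² is a unit vector, Φ_e = nu and Φ_p = -(1/(2m))iσ·∇Φ_e, then (Φ_e, Φ_p)
solves the ε = 0 system: -(1/(2m))Φ_e = -iσ·∇Φ_p + Φ_eΔ⁻¹|Φ_e|² and
2mΦ_p = -iσ·∇Φ_e. -/
theorem limit_system_solution (m : ℝ) (hm : 0 < m)
    (u : EuclideanSpace ℝ (Fin 3) → ℝ) (hu : ContDiff ℝ (⊤ : ℕ∞) u)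
    (hupos : ∀ x, 0 < u x)
    (hchoq : ∀ x, -(1 / (2 * m)) * u x
      = -(1 / (2 * m)) * lap u x + u x * newton (fun y => u y ^ 2) x)
    (n : Fin 2 → ℂ) (hn : ∑ a, Complex.normSq (n a) = 1)
    (Φe Φp : EuclideanSpace ℝ (Fin 3) → (Fin 2 → ℂ))
    (hΦe : ∀ x a, Φe x a = (u x : ℂ) * n a)
    (hΦp : ∀ x, Φp x = -((1 / (2 * m)) • (Complex.I • sigmaGrad Φe x))) :
    ∀ x,
      (-(1 / (2 * m))) • Φe x
        = -(Complex.I • sigmaGrad Φp x)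
          + (newton (fun y => ∑ a, Complex.normSq (Φe y a)) x) • Φe x
      ∧ (2 * m) • Φp x = -(Complex.I • sigmaGrad Φe x) := by
  have hΦe' : Φe = fun x => (u x : ℂ) • n := by
    funext x a; simp [hΦe, smul_eq_mul]
  -- differentiability facts
  have hud : Differentiable ℝ u := hu.differentiable (by simp)
  have hpdu : ∀ j, ContDiff ℝ (⊤ : ℕ∞) (pd j u) := by
    intro j
    exact (hu.fderiv_right (by simp)).clm_apply contDiff_const
  -- first derivatives of Φe
  have hpdΦe : ∀ j x, pd j Φe x = ((pd j u x : ℝ) : ℂ) • n := by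
    intro j x
    rw [hΦe']
    exact fderiv_ofReal_smul u (hud x) n (e3 j)
  -- sigmaGrad Φe
  have hS : ∀ x, sigmaGrad Φe x = ∑ j : Fin 3, ((pd j u x : ℝ) : ℂ) • (pauli j).mulVec n := by
    intro x
    simp only [sigmaGrad, hpdΦe, Matrix.mulVec_smul]
  -- the scalar constant
  set c : ℂ := -(((1 / (2 * m) : ℝ) : ℂ) * I) with hc
  have hΦp' : Φp = fun x => c • ∑ j : Fin 3, ((pd j u x : ℝ) : ℂ) • (pauli j).mulVec n := by
    funext x
    rw [hΦp x, hS x, real_smul_pi, smul_smul, ← neg_smul]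
  -- differentiability of the summands
  have hdiffT : ∀ (j : Fin 3) (x : EuclideanSpace ℝ (Fin 3)),
      DifferentiableAt ℝ (fun x => ((pd j u x : ℝ) : ℂ) • (pauli j).mulVec n) x := by
    intro j x
    have : (fun x => ((pd j u x : ℝ) : ℂ) • (pauli j).mulVec n)
        = (Lmap ((pauli j).mulVec n)) ∘ (pd j u) := rfl
    rw [this]
    exact ((Lmap ((pauli j).mulVec n)).differentiable.comp
      ((hpdu j).differentiable (by simp))).differentiableAt
  -- derivatives of Φp
  have hpdΦp : ∀ k x, pd k Φp x
      = c • ∑ j : Fin 3, ((pd k (pd j u) x : ℝ) : ℂ) • (pauli j).mulVec n := by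
    intro k x
    rw [hΦp']
    show fderiv ℝ (fun x => c • ∑ j : Fin 3, ((pd j u x : ℝ) : ℂ) • (pauli j).mulVec n) x (e3 k)
      = _
    rw [fderiv_fun_const_smul (DifferentiableAt.fun_sum (fun j _ => hdiffT j x)) c]
    rw [fderiv_fun_sum (fun j _ => hdiffT j x)]
    simp only [ContinuousLinearMap.smul_apply, ContinuousLinearMap.sum_apply]
    congr 1
    refine Finset.sum_congr rfl fun j _ => ?_
    exact fderiv_ofReal_smul (pd j u) (((hpdu j).differentiable (by simp)) x)
      ((pauli j).mulVec n) (e3 k)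
  -- sigmaGrad Φp
  have hSp : ∀ x, sigmaGrad Φp x = (c * ((lap u x : ℝ) : ℂ)) • n := by
    intro x
    have : sigmaGrad Φp x
        = ∑ k : Fin 3, (pauli k).mulVec
            (c • ∑ j : Fin 3, ((pd k (pd j u) x : ℝ) : ℂ) • (pauli j).mulVec n) := by
      simp only [sigmaGrad, hpdΦp]
    rw [this]
    have hmv : ∀ (k : Fin 3) (v : Fin 3 → Fin 2 → ℂ),
        (pauli k).mulVec (∑ j : Fin 3, v j) = ∑ j : Fin 3, (pauli k).mulVec (v j) := by
      intro k v
      simp only [← Matrix.mulVecLin_apply, map_sum]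
    calc ∑ k : Fin 3, (pauli k).mulVec
            (c • ∑ j : Fin 3, ((pd k (pd j u) x : ℝ) : ℂ) • (pauli j).mulVec n)
        = c • ∑ k : Fin 3, ∑ j : Fin 3,
            ((pd k (pd j u) x : ℝ) : ℂ) • (pauli k).mulVec ((pauli j).mulVec n) := by
          rw [Finset.smul_sum]
          refine Finset.sum_congr rfl fun k _ => ?_
          rw [Matrix.mulVec_smul, hmv]
          congr 1
          refine Finset.sum_congr rfl fun j _ => ?_
          rw [Matrix.mulVec_smul]
      _ = c • (((lap u x : ℝ) : ℂ) • n) := by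
          rw [pauli_key (fun k j => pd k (pd j u) x) (fun k j => pd_symm u hu j k x) n]
          rfl
      _ = (c * ((lap u x : ℝ) : ℂ)) • n := by rw [smul_smul]
  -- the newton potential identity
  have hfeq : (fun y => ∑ a, Complex.normSq (Φe y a))
      = fun y : EuclideanSpace ℝ (Fin 3) => u y ^ 2 := by
    funext y
    calc ∑ a, Complex.normSq (Φe y a) = ∑ a, u y ^ 2 * Complex.normSq (n a) :=
          Finset.sum_congr rfl fun a _ => by
            rw [hΦe, Complex.normSq_mul, Complex.normSq_ofReal]; ring
      _ = u y ^ 2 := by rw [← Finset.mul_sum, hn, mul_one]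
  have hnewt : newton (fun y => ∑ a, Complex.normSq (Φe y a)) = newton (fun y => u y ^ 2) := by
    rw [hfeq]
  intro x
  constructor
  · -- first equation
    rw [hnewt, hSp x]
    funext a
    have hΦea := hΦe x a
    have hc2 : ((-(1 / (2 * m)) * u x : ℝ) : ℂ)
        = ((-(1 / (2 * m)) * lap u x + u x * newton (fun y => u y ^ 2) x : ℝ) : ℂ) := by
      exact_mod_cast congrArg Complex.ofReal (hchoq x)
    simp only [Pi.smul_apply, Pi.add_apply, Pi.neg_apply, smul_eq_mul, Complex.real_smul,
      hΦea, hc]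
    push_cast at hc2 ⊢
    linear_combination hc2 * n a
      - (n a * ((lap u x : ℝ) : ℂ) * (1/(2*(m:ℂ)))) * Complex.I_sq
  · -- second equation
    rw [hΦp x, smul_neg, smul_smul]
    have : (2 * m) * (1 / (2 * m)) = (1 : ℝ) := by
      field_simp
    rw [this, one_smul]
end
end

section
/- Let L₀ and L₁ be self-adjoint operators on a real Hilbert space, with L₀ ≥ 0 and ker L₀ = span{u} for some nonzero u. Suppose λ ∈ ℂ, λ ≠ 0, and R is a nonzero (complexified) vector with L₀ L₁ R = -λ² R. Then R ⊥ u, and if additionally R is in the domain where L₀⁻¹ is defined on {u}^⊥, the identity -λ² ⟨R, L₀⁻¹ R⟩ = ⟨R, L₁ R⟩ holds; since both inner products are real, λ² ∈ ℝ. -/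
/-!
Pairing `L₀ L₁ R = -λ² R` with any `x` and moving `L₀` across gives
`-λ² ⟪x, R⟫ = ⟪L₀ x, L₁ R⟫`. For `x = u` the right side vanishes; for `x = S` with `L₀ S = R`
it is `⟪R, L₁ R⟫`, which is real, while `⟪R, S⟫ = ⟪L₀ S, S⟫` is strictly positive because
`L₀ = B* B` and `B S ≠ 0`. Hence `λ²` is a real number.
-/

open scoped InnerProductSpace ComplexOrder

namespace ContinuousLinearMap

theorem IsPositive.inner_apply_self_pos {H : Type*} [NormedAddCommGroup H]
    [InnerProductSpace ℂ H] [CompleteSpace H] {T : H →L[ℂ] H} (hT : T.IsPositive) {x : H}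
    (hx : T x ≠ 0) : 0 < ⟪T x, x⟫_ℂ := by
  obtain ⟨B, rfl⟩ := CStarAlgebra.nonneg_iff_eq_star_mul_self.mp (T.nonneg_iff_isPositive.mpr hT)
  have hBx : B x ≠ 0 := fun h ↦ hx (by simp [mul_apply_eq_comp, h])
  rw [mul_apply_eq_comp, star_eq_adjoint, adjoint_inner_left]
  exact RCLike.pos_iff.mpr ⟨re_inner_self_pos.mpr hBx, inner_self_im _⟩

end ContinuousLinearMap

theorem Complex.im_eq_zero_of_mul_eq_of_pos {z c w : ℂ} (hc : 0 < c) (hw : w.im = 0)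
    (h : z * c = w) : z.im = 0 := by
  have hc_re : 0 < c.re := (Complex.lt_def.mp hc).1
  have hc_im : c.im = 0 := (Complex.lt_def.mp hc).2.symm
  have him := congrArg Complex.im h
  rw [Complex.mul_im, hc_im, hw, mul_zero, zero_add] at him
  exact (mul_eq_zero.mp him).resolve_right hc_re.ne'

theorem eigenvalue_squared_real_general
    {H : Type*} [NormedAddCommGroup H] [InnerProductSpace ℂ H] [CompleteSpace H]
    (L0 L1 : H →L[ℂ] H)
    (h0sa : IsSelfAdjoint L0) (h1sa : IsSelfAdjoint L1)
    (h0pos : ∀ x : H, 0 ≤ (inner ℂ x (L0 x) : ℂ).re)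
    (u : H)
    (hker : LinearMap.ker (L0 : H →ₗ[ℂ] H) = Submodule.span ℂ {u})
    (lam : ℂ) (hlam : lam ≠ 0) (R : H) (hR : R ≠ 0)
    (heig : L0 (L1 R) = (-(lam ^ 2)) • R) :
    (inner ℂ u R : ℂ) = 0 ∧
      ∀ S : H, L0 S = R →
        ((-(lam ^ 2)) * (inner ℂ R S : ℂ) = (inner ℂ R (L1 R) : ℂ)
          ∧ (lam ^ 2).im = 0) := by
  have hL0 : L0.IsPositive :=
    ⟨h0sa.isSymmetric, fun x ↦ by
      rw [ContinuousLinearMap.reApplyInnerSelf_apply, inner_re_symm]; exact h0pos x⟩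
  have hpair : ∀ x, -(lam ^ 2) * ⟪x, R⟫_ℂ = ⟪L0 x, L1 R⟫_ℂ := fun x ↦ by
    rw [← inner_smul_right, ← heig, hL0.inner_left_eq_inner_right]
  have hLu : L0 u = 0 := by
    simpa using hker.ge (Submodule.mem_span_singleton_self u)
  refine ⟨?_, fun S hS ↦ ?_⟩
  · have h := hpair u
    rw [hLu, inner_zero_left] at h
    exact (mul_eq_zero.mp h).resolve_left (neg_ne_zero.mpr (pow_ne_zero 2 hlam))
  · have hRS : ⟪R, S⟫_ℂ = ⟪S, R⟫_ℂ := by rw [← hS, hL0.inner_left_eq_inner_right]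
    have heq : -(lam ^ 2) * ⟪R, S⟫_ℂ = ⟪R, L1 R⟫_ℂ := by rw [hRS, hpair, hS]
    have hpos : 0 < ⟪R, S⟫_ℂ := hS ▸ hL0.inner_apply_self_pos (hS ▸ hR)
    refine ⟨heq, ?_⟩
    simpa using Complex.im_eq_zero_of_mul_eq_of_pos hpos
      (h1sa.isSymmetric.im_inner_self_apply R) heq

/-- Let L₀, L₁ be self-adjoint, L₀ ≥ 0 with ker L₀ = span{u}, u ≠ 0. If λ ≠ 0
and R ≠ 0 satisfies L₀L₁R = -λ²R, then R ⊥ u, and whenever L₀S = R (i.e.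
S = L₀⁻¹R on {u}^⊥) one has -λ²⟨R, L₀⁻¹R⟩ = ⟨R, L₁R⟩; since both inner
products are real, λ² ∈ ℝ. -/
theorem eigenvalue_squared_real
    {H : Type*} [NormedAddCommGroup H] [InnerProductSpace ℂ H] [CompleteSpace H]
    (L0 L1 : H →L[ℂ] H)
    (h0sa : IsSelfAdjoint L0) (h1sa : IsSelfAdjoint L1)
    (h0pos : ∀ x : H, 0 ≤ (inner ℂ x (L0 x) : ℂ).re)
    (u : H) (hu : u ≠ 0)
    (hker : LinearMap.ker (L0 : H →ₗ[ℂ] H) = Submodule.span ℂ {u})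
    (lam : ℂ) (hlam : lam ≠ 0) (R : H) (hR : R ≠ 0)
    (heig : L0 (L1 R) = (-(lam ^ 2)) • R) :
    (inner ℂ u R : ℂ) = 0 ∧
      ∀ S : H, L0 S = R →
        ((-(lam ^ 2)) * (inner ℂ R S : ℂ) = (inner ℂ R (L1 R) : ℂ)
          ∧ (lam ^ 2).im = 0) :=
  eigenvalue_squared_real_general L0 L1 h0sa h1sa h0pos u hker lam hlam R hR heig
end
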